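/- Let A be a unital Banach algebra and x ∈ A accretive. Then the closed subalgebra generated by x equals the closed subalgebra generated by F(x) = x(1+x)^{-1}. Consequently the closure of xA equals the closure of F(x)A. -/

import Mathlib

/-!
Testing against the state `z ↦ φ (z * a) / ‖a‖`, where `φ` is a norming functional for `a`,
shows `Re c * ‖a‖ ≤ ‖(c + x) * a‖` for accretive `x`. This bounds the resolvent, and starting
from `c + ‖x‖` one step of perturbation reaches `c + x`, so `c + x` is invertible whenever
`Re c > 0`. Hence the ray `(-∞, -1]` avoids `σ(x)`: the point `-1` lies in the unbounded
component of the resolvent set of `x`, so `(1 + x)⁻¹` lies in the closed unital algebra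
generated by `x`, and `F(x) = x (1 + x)⁻¹` in the closed non-unital one. Conversely
`t - F(x) = (t + (t - 1) x) (1 + x)⁻¹` is invertible for real `t ≥ 1`, so the ray `[1, ∞)` avoids
`σ(F(x))`, whence `(1 - F(x))⁻¹ = 1 + x` lies in the closed unital algebra generated by `F(x)` and
`x = F(x) (1 + x)` in the closed non-unital one. The identity `x = F(x) (1 + x)` also gives
`x A = F(x) A` before taking closures.
-/

open Bornology

theorem NonUnitalAlgebra.mul_mem_adjoin_of_mem_algebraAdjoin {R A : Type*} [CommSemiring R]
    [Semiring A] [Algebra R A] {s : Set A} {n b : A} (hn : n ∈ NonUnitalAlgebra.adjoin R s)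
    (hb : b ∈ Algebra.adjoin R s) : n * b ∈ NonUnitalAlgebra.adjoin R s := by
  induction hb using Algebra.adjoin_induction generalizing n with
  | mem b hb => exact mul_mem hn (subset_adjoin R hb)
  | algebraMap r =>
    rw [Algebra.algebraMap_eq_smul_one, mul_smul_comm, mul_one]
    exact SMulMemClass.smul_mem r hn
  | add b c _ _ hb hc => exact mul_add n b c ▸ add_mem (hb hn) (hc hn)
  | mul b c _ _ hb hc => exact (mul_assoc n b c).symm ▸ hc (hb hn)

theorem NonUnitalAlgebra.mul_mem_elemental_of_mem_algebraElemental {R A : Type*} [CommSemiring R]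
    [Ring A] [Algebra R A] [TopologicalSpace A] [IsSemitopologicalSemiring A]
    [ContinuousConstSMul R A] {a b : A} (hb : b ∈ Algebra.elemental R a) :
    a * b ∈ NonUnitalAlgebra.elemental R a :=
  map_mem_closure (by fun_prop) hb fun _ hc ↦
    mul_mem_adjoin_of_mem_algebraAdjoin (self_mem_adjoin_singleton R a) hc

theorem Subalgebra.notMem_spectrum_of_isPreconnected {𝕜 A SA : Type*} [NormedField 𝕜]
    [NormedRing A] [CompleteSpace A] [NormedAlgebra 𝕜 A] [SetLike SA A] [SubringClass SA A]
    [SMulMemClass SA 𝕜 A] (S : SA) [IsClosed (S : Set A)] (a : S) {U : Set 𝕜}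
    (hU : IsPreconnected U) (hU_unbdd : ¬ IsBounded U) (hUσ : Disjoint U (spectrum 𝕜 (a : A)))
    {z : 𝕜} (hz : z ∈ U) : z ∉ spectrum 𝕜 a := fun hza ↦
  hU_unbdd <| (spectrum_isBounded_connectedComponentIn S a hza).subset <|
    hU.subset_connectedComponentIn hz hUσ.subset_compl_right

theorem Algebra.mem_elemental_of_mul_eq_one {A : Type*} [NormedRing A] [NormedAlgebra ℂ A]
    [CompleteSpace A] {a b : A} {w : ℂ} (hw : w ≠ 0)
    (hray : ∀ t : ℝ, 1 ≤ t → (t : ℂ) * w ∉ spectrum ℂ a)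
    (hb : (algebraMap ℂ A w - a) * b = 1) : b ∈ Algebra.elemental ℂ a := by
  set U := (fun t : ℝ ↦ (t : ℂ) * w) '' Set.Ici 1
  have hU : IsPreconnected U := isPreconnected_Ici.image _ (by fun_prop)
  have hU_unbdd : ¬ IsBounded U := fun h ↦ by
    obtain ⟨C, hC⟩ := isBounded_iff_forall_norm_le.mp h
    obtain ⟨t, ht, htC⟩ : ∃ t : ℝ, 1 ≤ t ∧ C < t * ‖w‖ :=
      (((Filter.tendsto_id.atTop_mul_const (norm_pos_iff.mpr hw)).eventually_gt_atTop C).and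
        (Filter.eventually_ge_atTop 1)).exists.imp fun _ h ↦ h.symm
    have := hC _ ⟨t, ht, rfl⟩
    rw [norm_mul, Complex.norm_real, Real.norm_of_nonneg (zero_le_one.trans ht)] at this
    linarith
  have hUσ : Disjoint U (spectrum ℂ a) :=
    Set.disjoint_left.mpr fun _ ⟨t, ht, htw⟩ ↦ htw ▸ hray t ht
  have hw_spec := Subalgebra.notMem_spectrum_of_isPreconnected (z := w) (Algebra.elemental ℂ a)
    ⟨a, Algebra.elemental.self_mem ℂ a⟩ hU hU_unbdd hUσ ⟨1, Set.mem_Ici.mpr le_rfl, by simp⟩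
  obtain ⟨u, hu⟩ := spectrum.notMem_iff.mp hw_spec
  have hv : ((↑u⁻¹ : Algebra.elemental ℂ a) : A) * (algebraMap ℂ A w - a) = 1 := by
    simpa [hu] using congrArg Subtype.val u.inv_mul
  have hbv : b = ((↑u⁻¹ : Algebra.elemental ℂ a) : A) := by
    rw [← one_mul b, ← hv, mul_assoc, hb, mul_one]
  exact hbv ▸ Subtype.prop _

section Accretive

variable {A : Type*} [NormedRing A] [NormedAlgebra ℂ A]

def IsAccretive (x : A) : Prop :=
  ∀ φ : StrongDual ℂ A, ‖φ‖ = 1 → φ 1 = 1 → 0 ≤ (φ x).re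

theorem IsAccretive.ofReal_smul {x : A} (hx : IsAccretive x) {s : ℝ} (hs : 0 ≤ s) :
    IsAccretive ((s : ℂ) • x) := fun φ hφ hφ1 ↦ by
  simpa using mul_nonneg hs (hx φ hφ hφ1)

variable [NormOneClass A]

theorem exists_state_norm_mul_norm_apply_le {a : A} (ha : a ≠ 0) :
    ∃ ψ : StrongDual ℂ A, ‖ψ‖ = 1 ∧ ψ 1 = 1 ∧ ∀ z, ‖a‖ * ‖ψ z‖ ≤ ‖z * a‖ := by
  have ha₀ : 0 < ‖a‖ := norm_pos_iff.mpr ha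
  obtain ⟨φ, hφ, hφa⟩ := exists_dual_vector ℂ a ha₀.ne'
  set ψ : StrongDual ℂ A := (‖a‖ : ℂ)⁻¹ • φ.comp ((ContinuousLinearMap.mul ℂ A).flip a)
  have hψ1 : ψ 1 = 1 := by
    simp [ψ, hφa, inv_mul_cancel₀ (Complex.ofReal_ne_zero.mpr ha₀.ne')]
  have hψ : ∀ z, ‖a‖ * ‖ψ z‖ ≤ ‖z * a‖ := fun z ↦ by
    simpa [ψ, norm_smul, ha₀.ne', hφ] using φ.le_opNorm (z * a)
  refine ⟨ψ, le_antisymm ?_ (by simpa [hψ1] using ψ.le_opNorm 1), hψ1, hψ⟩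
  refine ψ.opNorm_le_bound zero_le_one fun z ↦ le_of_mul_le_mul_left ?_ ha₀
  calc ‖a‖ * ‖ψ z‖ ≤ ‖z * a‖ := hψ z
    _ ≤ ‖a‖ * (1 * ‖z‖) := by rw [one_mul, mul_comm]; exact norm_mul_le z a

theorem IsAccretive.re_mul_norm_le {x : A} (hx : IsAccretive x) (c : ℂ) (a : A) :
    c.re * ‖a‖ ≤ ‖(algebraMap ℂ A c + x) * a‖ := by
  rcases eq_or_ne a 0 with rfl | ha
  · simp
  obtain ⟨ψ, hψ, hψ1, hψa⟩ := exists_state_norm_mul_norm_apply_le ha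
  have hψc : ψ (algebraMap ℂ A c + x) = c + ψ x := by
    simp [Algebra.algebraMap_eq_smul_one, hψ1]
  calc c.re * ‖a‖ ≤ (ψ (algebraMap ℂ A c + x)).re * ‖a‖ := by
        rw [hψc, Complex.add_re]
        gcongr
        exact le_add_of_nonneg_right (hx ψ hψ hψ1)
    _ ≤ ‖ψ (algebraMap ℂ A c + x)‖ * ‖a‖ := by gcongr; exact Complex.re_le_norm _
    _ ≤ ‖(algebraMap ℂ A c + x) * a‖ := by rw [mul_comm]; exact hψa _

variable [CompleteSpace A]

theorem IsAccretive.isUnit_algebraMap_add {x : A} (hx : IsAccretive x) {c : ℂ} (hc : 0 < c.re) :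
    IsUnit (algebraMap ℂ A c + x) := by
  have : Nontrivial A := NormOneClass.nontrivial
  set d : ℂ := c + ‖x‖
  have hd : ‖x‖ < d.re := by simp [d, hc]
  obtain ⟨u, hu⟩ : IsUnit (algebraMap ℂ A d + x) := by
    have hd_spec : -d ∉ spectrum ℂ x := fun h ↦ by
      have := spectrum.norm_le_norm_of_mem h
      rw [norm_neg] at this
      linarith [Complex.re_le_norm d]
    simpa [sub_eq_add_neg, add_comm] using (spectrum.notMem_iff.mp hd_spec).neg
  have hu_inv : d.re * ‖(↑u⁻¹ : A)‖ ≤ 1 := by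
    simpa [← hu] using hx.re_mul_norm_le d (↑u⁻¹ : A)
  refine (u.ofNearby _ ?_).isUnit
  rw [hu, add_sub_add_right_eq_sub, ← map_sub, norm_algebraMap', sub_add_cancel_left, norm_neg,
    Complex.norm_real, norm_norm]
  exact hd.trans_le (by simpa using (le_div_iff₀ (Units.norm_pos u⁻¹)).mpr hu_inv)

variable {x y : A}

theorem IsAccretive.mul_mem_elemental (hx : IsAccretive x) (hy : (1 + x) * y = 1) :
    x * y ∈ NonUnitalAlgebra.elemental ℂ x := by
  refine NonUnitalAlgebra.mul_mem_elemental_of_mem_algebraElemental ?_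
  have hray (t : ℝ) (ht : 1 ≤ t) : (t : ℂ) * -1 ∉ spectrum ℂ x := by
    rw [spectrum.notMem_iff, mul_neg_one, map_neg, ← neg_add']
    exact (hx.isUnit_algebraMap_add (by simpa using zero_lt_one.trans_le ht)).neg
  simpa using neg_mem (Algebra.mem_elemental_of_mul_eq_one (b := -y)
    (neg_ne_zero.mpr one_ne_zero) hray (by rw [map_neg, map_one, ← neg_add', neg_mul_neg, hy]))

theorem IsAccretive.mem_elemental_mul (hx : IsAccretive x) (hy : (1 + x) * y = 1)
    (hy' : y * (1 + x) = 1) : x ∈ NonUnitalAlgebra.elemental ℂ (x * y) := by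
  have hy_add : y + x * y = 1 := by rw [← hy, add_mul, one_mul]
  have hray (t : ℝ) (ht : 1 ≤ t) : (t : ℂ) * 1 ∉ spectrum ℂ (x * y) := by
    have hfactor : algebraMap ℂ A t - x * y = (algebraMap ℂ A t + ((t - 1 : ℝ) : ℂ) • x) * y := by
      rw [Algebra.algebraMap_eq_smul_one, add_mul, smul_mul_assoc, smul_mul_assoc, one_mul,
        ← hy_add]
      push_cast
      module
    rw [mul_one, spectrum.notMem_iff, hfactor]
    exact ((hx.ofReal_smul (sub_nonneg.mpr ht)).isUnit_algebraMap_add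
      (by simpa using zero_lt_one.trans_le ht)).mul ⟨⟨y, 1 + x, hy', hy⟩, rfl⟩
  have h1x : 1 + x ∈ Algebra.elemental ℂ (x * y) :=
    Algebra.mem_elemental_of_mul_eq_one one_ne_zero hray
      (by rw [map_one, sub_eq_of_eq_add hy_add.symm, hy'])
  simpa [mul_assoc, hy'] using NonUnitalAlgebra.mul_mem_elemental_of_mem_algebraElemental h1x

end Accretive

/-- Let `A` be a unital Banach algebra and `x ∈ A` accretive, with
`y = (1+x)⁻¹`.  Then the closed subalgebra generated by `x` equals the closed subalgebra
generated by `F(x) = x(1+x)⁻¹ = x * y`.  Consequently the closure of `xA` equals the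
closure of `F(x)A`. -/
theorem closure_adjoin_eq_closure_adjoin_Ftransform
    {A : Type*} [NormedRing A] [NormedAlgebra ℂ A] [NormOneClass A] [CompleteSpace A]
    (x y : A)
    (hacc : ∀ φ : StrongDual ℂ A, ‖φ‖ = 1 → φ 1 = 1 → 0 ≤ (φ x).re)
    (hy : (1 + x) * y = 1) (hy' : y * (1 + x) = 1) :
    closure ((NonUnitalAlgebra.adjoin ℂ {x} : NonUnitalSubalgebra ℂ A) : Set A) =
      closure ((NonUnitalAlgebra.adjoin ℂ {x * y} : NonUnitalSubalgebra ℂ A) : Set A) ∧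
    closure {w : A | ∃ a : A, w = x * a} = closure {w : A | ∃ a : A, w = (x * y) * a} := by
  have hxy := IsAccretive.mul_mem_elemental hacc hy
  have hx := IsAccretive.mem_elemental_mul hacc hy hy'
  have h_elemental : NonUnitalAlgebra.elemental ℂ x = NonUnitalAlgebra.elemental ℂ (x * y) :=
    le_antisymm (NonUnitalAlgebra.elemental.le_of_mem (NonUnitalAlgebra.elemental.isClosed ..) hx)
      (NonUnitalAlgebra.elemental.le_of_mem (NonUnitalAlgebra.elemental.isClosed ..) hxy)
  refine ⟨congrArg SetLike.coe h_elemental, congrArg closure (Set.ext fun w ↦ ⟨?_, ?_⟩)⟩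
  · rintro ⟨a, rfl⟩
    exact ⟨(1 + x) * a, by rw [mul_assoc, ← mul_assoc y, hy', one_mul]⟩
  · rintro ⟨a, rfl⟩
    exact ⟨y * a, mul_assoc x y a⟩
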